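/- Let A be an m×m zeon matrix with A† = A (self-adjoint with respect to the inner product ⟨x|y⟩ = y†x on CZ^m). If λ₁ and λ₂ are zeon eigenvalues of A with eigenvectors v₁, v₂ such that the scalar parts Cλ₁ ≠ Cλ₂, then v₁ and v₂ are orthogonal: ⟨v₁|v₂⟩ = 0. -/

import Mathlib

open scoped BigOperators

noncomputable section

/-- The ideal of squares of generators in the polynomial ring. -/
def zeonIdeal (n : ℕ) : Ideal (MvPolynomial (Fin n) ℂ) :=
  Ideal.span {p : MvPolynomial (Fin n) ℂ | ∃ i : Fin n, p = MvPolynomial.X i ^ 2}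

/-- The `n`-particle complex zeon algebra. -/
abbrev Zeon (n : ℕ) := MvPolynomial (Fin n) ℂ ⧸ zeonIdeal n

/-- The zeon generators. -/
def zeta (n : ℕ) (i : Fin n) : Zeon n := Ideal.Quotient.mk _ (MvPolynomial.X i)

/-- Basis blades. -/
def zetaBlade (n : ℕ) (I : Finset (Fin n)) : Zeon n := ∏ i ∈ I, zeta n i

/-- Scalar part map. -/
def scalarPart (n : ℕ) : Zeon n →+* ℂ :=
  Ideal.Quotient.lift _ (MvPolynomial.aeval (fun _ : Fin n => (0:ℂ))).toRingHom
    (fun a ha => by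
      have h : zeonIdeal n ≤
          RingHom.ker (MvPolynomial.aeval (fun _ : Fin n => (0:ℂ))).toRingHom := by
        rw [zeonIdeal, Ideal.span_le]
        rintro p ⟨i, rfl⟩
        simp [RingHom.mem_ker]
      exact h ha)

/-- Dual (nilpotent) part. -/
def dualPart (n : ℕ) (u : Zeon n) : Zeon n := u - algebraMap ℂ (Zeon n) (scalarPart n u)

/-- Conjugation on zeons: conjugate the complex coefficients, fix the generators. -/
def zconj (n : ℕ) : Zeon n →+* Zeon n :=
  Ideal.Quotient.lift _
    ((Ideal.Quotient.mk (zeonIdeal n)).comp (MvPolynomial.map (starRingEnd ℂ)))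
    (fun a ha => by
      have h : zeonIdeal n ≤ RingHom.ker
          ((Ideal.Quotient.mk (zeonIdeal n)).comp (MvPolynomial.map (starRingEnd ℂ))) := by
        rw [zeonIdeal, Ideal.span_le]
        rintro p ⟨i, rfl⟩
        simp only [Set.mem_setOf_eq, SetLike.mem_coe, RingHom.mem_ker, RingHom.comp_apply,
          map_pow, MvPolynomial.map_X]
        rw [← map_pow, Ideal.Quotient.eq_zero_iff_mem]
        exact Ideal.subset_span ⟨i, rfl⟩
      exact h ha)

end

/-! Self-adjointness gives `λ₁ ⟨v₁|v₂⟩ = conj λ₂ ⟨v₁|v₂⟩`. Taking `v₁ = v₂` and scalar parts shows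
that the scalar part of `λ₂` is real, so `λ₁ - conj λ₂` has scalar part `Cλ₁ - Cλ₂ ≠ 0` and is
invertible: its dual part lies in the ideal spanned by the square-zero generators, hence is
nilpotent. -/

section SesquilinearEigen

open Matrix

variable {R ι : Type*} [CommRing R] [Fintype ι] (σ : R →+* R) {A : Matrix ι ι R}

theorem vecMul_comp_eq_comp_mulVec (hA : ∀ i j, A i j = σ (A j i)) (y : ι → R) :
    (σ ∘ y) ᵥ* A = σ ∘ (A *ᵥ y) := by
  have hA' : A = (A.map σ)ᵀ := Matrix.ext fun i j => hA i j
  ext j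
  rw [hA', vecMul_transpose, Function.comp_apply, RingHom.map_mulVec, ← hA']

theorem mul_dotProduct_eq_of_mulVec_eq_smul (hA : ∀ i j, A i j = σ (A j i))
    {x y : ι → R} {lx ly : R} (hx : A *ᵥ x = lx • x) (hy : A *ᵥ y = ly • y) :
    lx * ((σ ∘ y) ⬝ᵥ x) = σ ly * ((σ ∘ y) ⬝ᵥ x) :=
  calc lx * ((σ ∘ y) ⬝ᵥ x) = (σ ∘ y) ⬝ᵥ (A *ᵥ x) := by
        rw [hx, dotProduct_smul, smul_eq_mul]
    _ = (σ ∘ (A *ᵥ y)) ⬝ᵥ x := by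
        rw [dotProduct_mulVec, vecMul_comp_eq_comp_mulVec σ hA]
    _ = σ ly * ((σ ∘ y) ⬝ᵥ x) := by
        rw [hy, ← smul_eq_mul, ← smul_dotProduct]
        congr 1
        ext i
        simp

end SesquilinearEigen

section ZeonScalarPart

open MvPolynomial

variable {n : ℕ}

theorem scalarPart_mk (p : MvPolynomial (Fin n) ℂ) :
    scalarPart n (Ideal.Quotient.mk _ p) = constantCoeff p := by
  simp [scalarPart]

theorem scalarPart_algebraMap (c : ℂ) : scalarPart n (algebraMap ℂ (Zeon n) c) = c :=
  (scalarPart_mk (C c)).trans (constantCoeff_C _ _)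

theorem zconj_mk (p : MvPolynomial (Fin n) ℂ) :
    zconj n (Ideal.Quotient.mk _ p) = Ideal.Quotient.mk _ (map (starRingEnd ℂ) p) :=
  Ideal.Quotient.lift_mk _ _ _

theorem scalarPart_zconj (u : Zeon n) :
    scalarPart n (zconj n u) = starRingEnd ℂ (scalarPart n u) := by
  obtain ⟨p, rfl⟩ := Ideal.Quotient.mk_surjective u
  rw [zconj_mk, scalarPart_mk, scalarPart_mk, constantCoeff_map]

theorem zeta_sq (i : Fin n) : zeta n i ^ 2 = 0 := by
  rw [zeta, ← map_pow, Ideal.Quotient.eq_zero_iff_mem]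
  exact Ideal.subset_span ⟨i, rfl⟩

theorem isNilpotent_of_scalarPart_eq_zero {u : Zeon n} (h : scalarPart n u = 0) :
    IsNilpotent u := by
  obtain ⟨p, rfl⟩ := Ideal.Quotient.mk_surjective u
  have hp : p ∈ Ideal.span (X '' Set.univ) := by
    refine mem_ideal_span_X_image.mpr fun d hd => ?_
    have hd0 : d ≠ 0 := by
      rintro rfl
      rw [scalarPart_mk, constantCoeff_eq] at h
      exact mem_support_iff.mp hd h
    obtain ⟨i, hi⟩ := Finsupp.ne_iff.mp hd0
    exact ⟨i, Set.mem_univ i, hi⟩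
  have hvars : Ideal.span (X '' Set.univ) ≤ (nilradical (Zeon n)).comap (Ideal.Quotient.mk _) := by
    rw [Ideal.span_le]
    rintro _ ⟨i, -, rfl⟩
    exact mem_nilradical.mpr ⟨2, zeta_sq i⟩
  exact mem_nilradical.mp (hvars hp)

theorem isUnit_of_scalarPart_ne_zero {u : Zeon n} (h : scalarPart n u ≠ 0) : IsUnit u := by
  have hdual : IsNilpotent (dualPart n u) :=
    isNilpotent_of_scalarPart_eq_zero (by rw [dualPart, map_sub, scalarPart_algebraMap, sub_self])
  have hscalar : IsUnit (algebraMap ℂ (Zeon n) (scalarPart n u)) := (Ne.isUnit h).map _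
  simpa [dualPart] using hdual.isUnit_add_left_of_commute hscalar (Commute.all _ _)

end ZeonScalarPart

theorem selfAdjoint_zeon_eigenvectors_orthogonal_general (n m : ℕ)
    (A : Matrix (Fin m) (Fin m) (Zeon n))
    (hA : ∀ i j, A i j = zconj n (A j i))
    (lam₁ lam₂ : Zeon n) (v₁ v₂ : Fin m → Zeon n)
    (h₁ : A.mulVec v₁ = lam₁ • v₁)
    (h₂ : A.mulVec v₂ = lam₂ • v₂)
    (hn₂ : scalarPart n (∑ i, zconj n (v₂ i) * v₂ i) ≠ 0)
    (hne : scalarPart n lam₁ ≠ scalarPart n lam₂) :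
    ∑ i, zconj n (v₂ i) * v₁ i = 0 := by
  have hreal : starRingEnd ℂ (scalarPart n lam₂) = scalarPart n lam₂ := by
    have h := congrArg (scalarPart n) (mul_dotProduct_eq_of_mulVec_eq_smul (zconj n) hA h₂ h₂)
    rw [map_mul, map_mul, scalarPart_zconj] at h
    exact (mul_right_cancel₀ hn₂ h).symm
  have hunit : IsUnit (lam₁ - zconj n lam₂) := by
    refine isUnit_of_scalarPart_ne_zero ?_
    rw [map_sub, scalarPart_zconj, hreal]
    exact sub_ne_zero_of_ne hne
  have hzero : (lam₁ - zconj n lam₂) * ∑ i, zconj n (v₂ i) * v₁ i = 0 := by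
    rw [sub_mul, sub_eq_zero]
    exact mul_dotProduct_eq_of_mulVec_eq_smul (zconj n) hA h₁ h₂
  exact hunit.mul_right_eq_zero.mp hzero

/-- eigenvectors of a self-adjoint zeon matrix whose eigenvalues
have distinct scalar parts are orthogonal with respect to `⟨x|y⟩ = y† x`. -/
theorem selfAdjoint_zeon_eigenvectors_orthogonal (n m : ℕ)
    (A : Matrix (Fin m) (Fin m) (Zeon n))
    (hA : ∀ i j, A i j = zconj n (A j i))
    (lam₁ lam₂ : Zeon n) (v₁ v₂ : Fin m → Zeon n)
    (h₁ : A.mulVec v₁ = lam₁ • v₁)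
    (h₂ : A.mulVec v₂ = lam₂ • v₂)
    (hn₁ : scalarPart n (∑ i, zconj n (v₁ i) * v₁ i) ≠ 0)
    (hn₂ : scalarPart n (∑ i, zconj n (v₂ i) * v₂ i) ≠ 0)
    (hne : scalarPart n lam₁ ≠ scalarPart n lam₂) :
    ∑ i, zconj n (v₂ i) * v₁ i = 0 :=
  selfAdjoint_zeon_eigenvectors_orthogonal_general n m A hA lam₁ lam₂ v₁ v₂ h₁ h₂ hn₂ hne
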